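/- arXiv:2403.03654 — 6 statements merged into one kernel-verified Lean document; each statement's English description precedes it below -/
import Mathlib

section
/- For n = 64 (so m = 32), with g the IOBC permutation shifting the left 31 bits and right 33 bits cyclically by 1, the number of 64-bit strings X with g^341(X) = X is 2^42; hence a uniformly random 64-bit string satisfies g^341(X) = X with probability 2^{-22}. -/
/-- Right cyclic shift by 1 of a bit-string of length `k`. -/
def cshift {k : ℕ} (f : ZMod k → Bool) : ZMod k → Bool := fun i => f (i - 1)

/-- The IOBC function `g` for `n = 64` (`m = 32`), acting on 64-bit strings split into
the leftmost 31 bits and rightmost 33 bits by independent right cyclic shifts by 1. -/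
def g64 : (ZMod 31 → Bool) × (ZMod 33 → Bool) → (ZMod 31 → Bool) × (ZMod 33 → Bool) :=
  fun X => (cshift X.1, cshift X.2)

/-!
Each half of `X` is rotated independently, so `g^n X = X` says that each half, viewed as a
function on `ZMod k`, is periodic with period `n`, equivalently (Bézout) with period
`gcd n k`; such a function is determined by its first `gcd n k` values. As
`gcd 341 31 = 31` and `gcd 341 33 = 11`, there are `2^31 · 2^11 = 2^42` fixed strings.
-/

open Function

lemma cshift_iterate {k : ℕ} (f : ZMod k → Bool) (n : ℕ) :
    cshift^[n] f = fun i => f (i - n) := by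
  induction n with
  | zero => funext i; simp
  | succ n ih =>
    rw [iterate_succ_apply', ih]
    funext i
    simp only [cshift, Nat.cast_succ, sub_sub, add_comm]

lemma cshift_iterate_eq_self_iff {k : ℕ} (f : ZMod k → Bool) (n : ℕ) :
    cshift^[n] f = f ↔ Periodic f (n : ZMod k) := by
  rw [cshift_iterate, funext_iff]
  refine ⟨fun h i => ?_, fun h i => h.sub_eq i⟩
  simpa using (h (i + n)).symm

-- By Bézout, `n` and `gcd n k` generate the same subgroup of `ZMod k`.
lemma periodic_natCast_iff_periodic_gcd {α : Type*} {k : ℕ} (f : ZMod k → α) (n : ℕ) :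
    Periodic f (n : ZMod k) ↔ Periodic f (Nat.gcd n k : ZMod k) := by
  constructor
  · intro h
    have hgcd : (Nat.gcd n k : ZMod k) = (n.gcdA k : ℤ) * (n : ZMod k) := by
      have := congrArg (Int.cast : ℤ → ZMod k) (Nat.gcd_eq_gcd_ab n k)
      push_cast [ZMod.natCast_self] at this
      rw [this, zero_mul, add_zero, mul_comm]
    rw [hgcd]
    exact h.int_mul _
  · intro h
    obtain ⟨m, hm⟩ := Nat.gcd_dvd_left n k
    rw [hm, Nat.cast_mul, mul_comm]
    exact h.nat_mul m

def periodicEquiv {α : Type*} {k d : ℕ} [NeZero k] (hd : d ∣ k) :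
    {f : ZMod k → α // Periodic f (d : ZMod k)} ≃ (ZMod d → α) :=
  haveI : NeZero d := ⟨fun h => NeZero.ne k (Nat.eq_zero_of_zero_dvd (h ▸ hd))⟩
  { toFun f j := f.1 (j.val : ZMod k)
    invFun g := ⟨fun i => g (ZMod.castHom hd (ZMod d) i), fun i => congrArg g <| by
      rw [map_add, map_natCast, ZMod.natCast_self, add_zero]⟩
    left_inv f := by
      obtain ⟨f, hf⟩ := f
      ext i
      have hi : i = ((i.val % d : ℕ) : ZMod k) + ((i.val / d : ℕ) : ZMod k) * d := by
        rw [← Nat.cast_mul, ← Nat.cast_add, Nat.mod_add_div', ZMod.natCast_zmod_val]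
      show f ((ZMod.castHom hd (ZMod d) i).val : ZMod k) = f i
      rw [ZMod.castHom_apply, ZMod.cast_eq_val, ZMod.val_natCast]
      conv_rhs => rw [hi]
      exact (hf.nat_mul _ _).symm
    right_inv g := by
      ext j
      show g (ZMod.castHom hd (ZMod d) (j.val : ZMod k)) = g j
      rw [map_natCast, ZMod.natCast_zmod_val] }

lemma card_cshift_iterate_fixed (k n : ℕ) [NeZero k] :
    Nat.card {f : ZMod k → Bool // cshift^[n] f = f} = 2 ^ Nat.gcd n k := by
  have e := (Equiv.subtypeEquivRight fun f => (cshift_iterate_eq_self_iff f n).trans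
    (periodic_natCast_iff_periodic_gcd f n)).trans (periodicEquiv (Nat.gcd_dvd_right n k))
  have : NeZero (Nat.gcd n k) := ⟨Nat.gcd_ne_zero_right (NeZero.ne k)⟩
  rw [Nat.card_congr e, Nat.card_fun, Nat.card_zmod,
    Nat.card_eq_fintype_card, Fintype.card_bool]

lemma g64_iterate_eq_self_iff (n : ℕ) (X : (ZMod 31 → Bool) × (ZMod 33 → Bool)) :
    g64^[n] X = X ↔ cshift^[n] X.1 = X.1 ∧ cshift^[n] X.2 = X.2 := by
  rw [show g64 = Prod.map cshift cshift from rfl, Prod.map_iterate, Prod.ext_iff]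
  rfl

def g64FixedEquiv (n : ℕ) : {X // g64^[n] X = X} ≃
    {f : ZMod 31 → Bool // cshift^[n] f = f} × {f : ZMod 33 → Bool // cshift^[n] f = f} :=
  (Equiv.subtypeEquivRight (g64_iterate_eq_self_iff n)).trans
    (Equiv.subtypeProdEquivProd (p := fun f => cshift^[n] f = f) (q := fun f => cshift^[n] f = f))

/-- The number of 64-bit strings fixed by `g^341` is `2^42`; hence a uniformly random
64-bit string `X` satisfies `g^341(X) = X` with probability `2⁻²²`. -/
theorem g64_iterate_341_fixed_count :
    Fintype.card {X : (ZMod 31 → Bool) × (ZMod 33 → Bool) // g64^[341] X = X} = 2 ^ 42 ∧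
    (Fintype.card {X : (ZMod 31 → Bool) × (ZMod 33 → Bool) // g64^[341] X = X} : ℚ) / 2 ^ 64
      = 1 / 2 ^ 22 := by
  have hcard : Fintype.card {X : (ZMod 31 → Bool) × (ZMod 33 → Bool) // g64^[341] X = X}
      = 2 ^ 42 := by
    rw [← Nat.card_eq_fintype_card, Nat.card_congr (g64FixedEquiv 341), Nat.card_prod,
      card_cshift_iterate_fixed, card_cshift_iterate_fixed]
    norm_num
  refine ⟨hcard, ?_⟩
  rw [hcard]
  norm_num
end

section
/- (PES-PCBC forgery correctness.) Let E : V → V be a bijection on an abelian group V of exponent 2 (n-bit blocks with XOR), with inverse D. Given IVs F₀, G₀ ∈ V and plaintext P₁,…,P_t, define encryption by G_i = P_i ⊕ F_{i-1}, F_i = E(G_i), C_i = F_i ⊕ G_{i-1}. Define decryption of any ciphertext C'₁,…,C'_s (with the same IVs) by F'_i = C'_i ⊕ G'_{i-1}, G'_i = D(F'_i), P'_i = G'_i ⊕ F'_{i-1} (with F'₀ = F₀, G'₀ = G₀). Fix j with 1 < j < t, and define the (t+2)-block ciphertext C'_i = C_i for 1 ≤ i ≤ j, C'_{j+1} = P_j,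 and C'_i = C_{i-2} for j+2 ≤ i ≤ t+2. Then the decryption of C'₁,…,C'_{t+2} satisfies P'_{t+2} = P_t. -/
/-- PES-PCBC forgery correctness: shifting the tail of a ciphertext by two blocks after
inserting the known plaintext block `Pⱼ` produces a forgery whose final decrypted block
equals the original final plaintext block `P_t`. -/
theorem pes_pcbc_forgery (n : ℕ)
    (E D : (Fin n → ZMod 2) → (Fin n → ZMod 2))
    (hE : Function.Bijective E)
    (hDE : ∀ x, D (E x) = x) (hED : ∀ x, E (D x) = x)
    (t j : ℕ) (hj1 : 1 < j) (hjt : j < t)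
    (P F G C : ℕ → (Fin n → ZMod 2))
    -- encryption of P₁,…,P_t with IVs F₀, G₀
    (hG : ∀ i, 1 ≤ i → i ≤ t → G i = P i + F (i - 1))
    (hF : ∀ i, 1 ≤ i → i ≤ t → F i = E (G i))
    (hC : ∀ i, 1 ≤ i → i ≤ t → C i = F i + G (i - 1))
    -- the forged ciphertext C'₁,…,C'_{t+2}
    (C' : ℕ → (Fin n → ZMod 2))
    (hC'a : ∀ i, 1 ≤ i → i ≤ j → C' i = C i)
    (hC'b : C' (j + 1) = P j)
    (hC'c : ∀ i, j + 2 ≤ i → i ≤ t + 2 → C' i = C (i - 2))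
    -- decryption of C'₁,…,C'_{t+2} with the same IVs
    (F' G' P' : ℕ → (Fin n → ZMod 2))
    (hF'0 : F' 0 = F 0) (hG'0 : G' 0 = G 0)
    (hF' : ∀ i, 1 ≤ i → i ≤ t + 2 → F' i = C' i + G' (i - 1))
    (hG' : ∀ i, 1 ≤ i → i ≤ t + 2 → G' i = D (F' i))
    (hP' : ∀ i, 1 ≤ i → i ≤ t + 2 → P' i = G' i + F' (i - 1)) :
    P' (t + 2) = P t := by
  have two : ∀ a : Fin n → ZMod 2, a + a = 0 := by
    intro a; funext i; exact CharTwo.add_self_eq_zero (a i)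
  have key : ∀ a b : Fin n → ZMod 2, a + b + b = a := by
    intro a b; rw [add_assoc, two, add_zero]
  have key2 : ∀ a b : Fin n → ZMod 2, a + (a + b) = b := by
    intro a b; rw [← add_assoc, two, zero_add]
  -- Phase 1: decryption agrees with encryption for i ≤ j
  have h1 : ∀ i, i ≤ j → F' i = F i ∧ G' i = G i := by
    intro i
    induction i with
    | zero => intro _; exact ⟨hF'0, hG'0⟩
    | succ i ih =>
      intro h
      obtain ⟨_, hGi⟩ := ih (Nat.le_of_succ_le h)
      have h1i : 1 ≤ i + 1 := by omega
      have hit : i + 1 ≤ t := by omega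
      have hFs : F' (i + 1) = F (i + 1) := by
        rw [hF' _ h1i (by omega), hC'a _ h1i h, hC _ h1i hit,
          Nat.add_sub_cancel, hGi, key]
      refine ⟨hFs, ?_⟩
      rw [hG' _ h1i (by omega), hFs, hF _ h1i hit, hDE]
  -- Step j+1
  have hFj1 : F' (j + 1) = F (j - 1) := by
    rw [hF' _ (by omega) (by omega), hC'b, Nat.add_sub_cancel,
      (h1 j le_rfl).2, hG j (by omega) (le_of_lt hjt), key2]
  have hGj1 : G' (j + 1) = G (j - 1) := by
    rw [hG' _ (by omega) (by omega), hFj1, hF (j - 1) (by omega) (by omega), hDE]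
  -- Phase 2: shifted agreement for i ≥ j+2
  have h2 : ∀ k, j + 2 + k ≤ t + 2 → F' (j + 2 + k) = F (j + k) ∧ G' (j + 2 + k) = G (j + k) := by
    intro k
    induction k with
    | zero =>
      intro hb
      have hFs : F' (j + 2) = F j := by
        rw [hF' _ (by omega) (by omega), hC'c _ le_rfl (by omega),
          show j + 2 - 2 = j from by omega, show j + 2 - 1 = j + 1 from by omega,
          hC j (by omega) (le_of_lt hjt), hGj1, key]
      simpa using ⟨hFs, by rw [hG' _ (by omega) (by omega), hFs, hF j (by omega) (le_of_lt hjt), hDE]⟩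
    | succ k ih =>
      intro hb
      obtain ⟨_, hGk⟩ := ih (by omega)
      have e1 : j + 2 + (k + 1) = j + 3 + k := by omega
      have hFs : F' (j + 2 + (k + 1)) = F (j + k + 1) := by
        rw [hF' _ (by omega) (by omega), hC'c _ (by omega) (by omega),
          show j + 2 + (k + 1) - 2 = j + k + 1 from by omega,
          show j + 2 + (k + 1) - 1 = j + 2 + k from by omega,
          hC (j + k + 1) (by omega) (by omega),
          show j + k + 1 - 1 = j + k from by omega, hGk, key]
      refine ⟨by simpa [show j + (k+1) = j + k + 1 from by omega] using hFs, ?_⟩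
      rw [hG' _ (by omega) (by omega), hFs, hF (j + k + 1) (by omega) (by omega), hDE,
        show j + (k + 1) = j + k + 1 from by omega]
  -- Conclusion
  have hGt : G' (t + 2) = G t := by
    have := (h2 (t - j) (by omega)).2
    rwa [show j + 2 + (t - j) = t + 2 from by omega, show j + (t - j) = t from by omega] at this
  have hFt : F' (t + 1) = F (t - 1) := by
    have := (h2 (t - j - 1) (by omega)).1
    rwa [show j + 2 + (t - j - 1) = t + 1 from by omega,
      show j + (t - j - 1) = t - 1 from by omega] at this
  rw [hP' _ (by omega) le_rfl, show t + 2 - 1 = t + 1 from by omega, hGt, hFt,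
    hG t (by omega) le_rfl, key]
end

section
/- (Generalised forgery for Figure-1 modes.) Let E : V → V be a bijection on V = (ZMod 2)^n with inverse D, and let g : V → V be an arbitrary function. Given IVs F₀, G₀ and plaintext P₁,…,P_t, define G_i = P_i ⊕ F_{i-1}, F_i = E(G_i), C₁ = F₁ ⊕ G₀, and C_i = F_i ⊕ g(G_{i-1}) for i ≥ 2. Decryption of C'₁,…,C'_s uses F'₁ = C'₁ ⊕ G₀, F'_i = C'_i ⊕ g(G'_{i-1}) for i ≥ 2, G'_i = D(F'_i), P'_i = G'_i ⊕ F'_{i-1}. Fix j with 1 < j < t and define C'_i = C_i for i ≤ j, C'_{j+1} = P_j ⊕ G_j ⊕ g(G_j), and C'_i = C_{i-2} for j+2 ≤ i ≤ t+2. Then the decrypted block P'_{t+2} equals P_t. -/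
/-- Generalised forgery for Figure-1 modes: for an arbitrary feedback function `g`,
inserting the block `Pⱼ ⊕ Gⱼ ⊕ g(Gⱼ)` and replaying the tail shifted by two blocks
produces a forgery whose final decrypted block equals `P_t`. -/
theorem figure1_generalised_forgery (n : ℕ)
    (E D : (Fin n → ZMod 2) → (Fin n → ZMod 2))
    (hE : Function.Bijective E)
    (hDE : ∀ x, D (E x) = x) (hED : ∀ x, E (D x) = x)
    (g : (Fin n → ZMod 2) → (Fin n → ZMod 2))
    (t j : ℕ) (hj1 : 1 < j) (hjt : j < t)
    (P F G C : ℕ → (Fin n → ZMod 2))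
    -- encryption of P₁,…,P_t with IVs F₀, G₀
    (hG : ∀ i, 1 ≤ i → i ≤ t → G i = P i + F (i - 1))
    (hF : ∀ i, 1 ≤ i → i ≤ t → F i = E (G i))
    (hC1 : C 1 = F 1 + G 0)
    (hC : ∀ i, 2 ≤ i → i ≤ t → C i = F i + g (G (i - 1)))
    -- the forged ciphertext C'₁,…,C'_{t+2}
    (C' : ℕ → (Fin n → ZMod 2))
    (hC'a : ∀ i, 1 ≤ i → i ≤ j → C' i = C i)
    (hC'b : C' (j + 1) = P j + G j + g (G j))
    (hC'c : ∀ i, j + 2 ≤ i → i ≤ t + 2 → C' i = C (i - 2))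
    -- decryption of C'₁,…,C'_{t+2} with the same IVs
    (F' G' P' : ℕ → (Fin n → ZMod 2))
    (hF'0 : F' 0 = F 0) (hG'0 : G' 0 = G 0)
    (hF'1 : F' 1 = C' 1 + G' 0)
    (hF' : ∀ i, 2 ≤ i → i ≤ t + 2 → F' i = C' i + g (G' (i - 1)))
    (hG' : ∀ i, 1 ≤ i → i ≤ t + 2 → G' i = D (F' i))
    (hP' : ∀ i, 1 ≤ i → i ≤ t + 2 → P' i = G' i + F' (i - 1)) :
    P' (t + 2) = P t := by
  have hx : ∀ x : Fin n → ZMod 2, x + x = 0 := fun x =>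
    funext fun k => CharTwo.add_self_eq_zero (x k)
  -- decryption agrees with encryption up to index j
  have key : ∀ i, 1 ≤ i → i ≤ j → F' i = F i ∧ G' i = G i := by
    intro i
    induction i with
    | zero => omega
    | succ m ih =>
      intro h1 h2
      by_cases hm : m = 0
      · subst hm
        have hF1 : F' 1 = F 1 := by
          rw [hF'1, hC'a 1 le_rfl (by omega), hC1, hG'0, add_assoc, hx, add_zero]
        refine ⟨hF1, ?_⟩
        rw [hG' 1 (by omega) (by omega), hF1, hF 1 (by omega) (by omega), hDE]
      · have hm1 : 1 ≤ m := by omega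
        obtain ⟨ihF, ihG⟩ := ih hm1 (by omega)
        have hFm : F' (m + 1) = F (m + 1) := by
          rw [hF' (m+1) (by omega) (by omega), hC'a (m+1) (by omega) (by omega),
            hC (m+1) (by omega) (by omega)]
          simp only [Nat.add_sub_cancel, ihG, add_assoc, hx, add_zero]
        refine ⟨hFm, ?_⟩
        rw [hG' (m+1) (by omega) (by omega), hFm, hF (m+1) (by omega) (by omega), hDE]
  -- the inserted block
  have hFj1 : F' (j + 1) = F (j - 1) := by
    rw [hF' (j+1) (by omega) (by omega), hC'b]
    simp only [Nat.add_sub_cancel, (key j (by omega) le_rfl).2]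
    rw [add_assoc, hx, add_zero, hG j (by omega) (by omega)]
    rw [← add_assoc, hx, zero_add]
  have hGj1 : G' (j + 1) = G (j - 1) := by
    rw [hG' (j+1) (by omega) (by omega), hFj1, hF (j-1) (by omega) (by omega), hDE]
  -- the shifted tail
  have tail : ∀ k, j + 1 ≤ k → k ≤ t + 2 → F' k = F (k - 2) ∧ G' k = G (k - 2) := by
    intro k
    induction k with
    | zero => omega
    | succ m ih =>
      intro h1 h2
      by_cases hm : m = j
      · subst hm
        constructor
        · simpa using hFj1
        · simpa using hGj1
      · have hmj : j + 1 ≤ m := by omega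
        obtain ⟨ihF, ihG⟩ := ih hmj (by omega)
        have e1 : m + 1 - 2 = m - 1 := by omega
        have hFk : F' (m + 1) = F (m - 1) := by
          rw [hF' (m+1) (by omega) (by omega), hC'c (m+1) (by omega) (by omega), e1,
            hC (m-1) (by omega) (by omega)]
          have e2 : m - 1 - 1 = m - 2 := by omega
          simp only [Nat.add_sub_cancel, e2, ihG, add_assoc, hx, add_zero]
        refine ⟨by rw [e1]; exact hFk, ?_⟩
        rw [e1, hG' (m+1) (by omega) (by omega), hFk, hF (m-1) (by omega) (by omega), hDE]
  -- conclusion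
  have h1 : G' (t + 2) = G t := by simpa using (tail (t+2) (by omega) le_rfl).2
  have h2 : F' (t + 1) = F (t - 1) := by simpa using (tail (t+1) (by omega) (by omega)).1
  have e : t + 2 - 1 = t + 1 := by omega
  rw [hP' (t+2) (by omega) le_rfl, e]
  simp only [h1, h2, hG t (by omega) le_rfl]
  rw [add_assoc, hx, add_zero]
end

section
/- (Splicing lemma.) With the Figure-1 mode (E a bijection on V = (ZMod 2)^n with inverse D, g : V → V arbitrary), let C₁,…,C_t and C'₁,…,C'_{t'} be encryptions of P₁,…,P_t and P'₁,…,P'_{t'} under the same key but possibly different IVs, with internal values F_i, G_i and F'_i, G'_i respectively. Fix u, v with 1 < u < t' and 1 < v < t. Then decrypting the ciphertext C'₁,…,C'_{u-1}, C_v ⊕ g(G'_{u-1}) ⊕ g(G_{v-1}), C_{v+1},…,C_t (using the IVs of the primed message) yields the plaintext P'₁,…,P'_{u-1}, P_v ⊕ F'_{u-1} ⊕ F_{v-1}, P_{v+1},…,P_t. -/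
/-- Splicing lemma: splicing the tail `C_v,…,C_t` of one ciphertext (with the `v`-th block
corrected by `g(G'_{u-1}) ⊕ g(G_{v-1})`) onto the head `C'₁,…,C'_{u-1}` of another yields a
ciphertext decrypting to `P'₁,…,P'_{u-1}, P_v ⊕ F'_{u-1} ⊕ F_{v-1}, P_{v+1},…,P_t`. -/
theorem figure1_splicing (n : ℕ)
    (E D : (Fin n → ZMod 2) → (Fin n → ZMod 2))
    (hE : Function.Bijective E)
    (hDE : ∀ x, D (E x) = x) (hED : ∀ x, E (D x) = x)
    (g : (Fin n → ZMod 2) → (Fin n → ZMod 2))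
    (t t' u v : ℕ) (hu1 : 1 < u) (hut' : u < t') (hv1 : 1 < v) (hvt : v < t)
    -- encryption of P₁,…,P_t with IVs F₀, G₀
    (P F G C : ℕ → (Fin n → ZMod 2))
    (hG : ∀ i, 1 ≤ i → i ≤ t → G i = P i + F (i - 1))
    (hF : ∀ i, 1 ≤ i → i ≤ t → F i = E (G i))
    (hC1 : C 1 = F 1 + G 0)
    (hC : ∀ i, 2 ≤ i → i ≤ t → C i = F i + g (G (i - 1)))
    -- encryption of P'₁,…,P'_{t'} with IVs F'₀, G'₀ (same key, possibly different IVs)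
    (P' F' G' C' : ℕ → (Fin n → ZMod 2))
    (hG' : ∀ i, 1 ≤ i → i ≤ t' → G' i = P' i + F' (i - 1))
    (hF' : ∀ i, 1 ≤ i → i ≤ t' → F' i = E (G' i))
    (hC'1 : C' 1 = F' 1 + G' 0)
    (hC' : ∀ i, 2 ≤ i → i ≤ t' → C' i = F' i + g (G' (i - 1)))
    -- the spliced ciphertext C*₁,…,C*_{t-v+u}
    (Cs : ℕ → (Fin n → ZMod 2))
    (hCsa : ∀ i, 1 ≤ i → i ≤ u - 1 → Cs i = C' i)
    (hCsb : Cs u = C v + g (G' (u - 1)) + g (G (v - 1)))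
    (hCsc : ∀ i, u + 1 ≤ i → i ≤ t - v + u → Cs i = C (v + i - u))
    -- decryption of the spliced ciphertext with the IVs of the primed message
    (Fs Gs Ps : ℕ → (Fin n → ZMod 2))
    (hFs0 : Fs 0 = F' 0) (hGs0 : Gs 0 = G' 0)
    (hFs1 : Fs 1 = Cs 1 + Gs 0)
    (hFs : ∀ i, 2 ≤ i → i ≤ t - v + u → Fs i = Cs i + g (Gs (i - 1)))
    (hGs : ∀ i, 1 ≤ i → i ≤ t - v + u → Gs i = D (Fs i))
    (hPs : ∀ i, 1 ≤ i → i ≤ t - v + u → Ps i = Gs i + Fs (i - 1)) :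
    (∀ i, 1 ≤ i → i ≤ u - 1 → Ps i = P' i) ∧
    Ps u = P v + F' (u - 1) + F (v - 1) ∧
    (∀ i, u + 1 ≤ i → i ≤ t - v + u → Ps i = P (v + i - u)) := by
  have hxx : ∀ x : Fin n → ZMod 2, x + x = 0 := fun x =>
    funext fun j => CharTwo.add_self_eq_zero (x j)
  have hcan : ∀ a b : Fin n → ZMod 2, a + b + b = a := fun a b => by
    rw [add_assoc, hxx, add_zero]
  have hcan2 : ∀ a b c : Fin n → ZMod 2, a + b + c + b + c = a := fun a b c => by
    have hb := hxx b; have hc := hxx c; linear_combination hb + hc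
  -- the head agrees with the primed internal state
  have claimA : ∀ i, i ≤ u - 1 → Fs i = F' i ∧ Gs i = G' i := by
    intro i
    induction i with
    | zero => intro _; exact ⟨hFs0, hGs0⟩
    | succ k ih =>
      intro hk
      have hle : k + 1 ≤ t - v + u := by omega
      have hle' : k + 1 ≤ t' := by omega
      have hFeq : Fs (k + 1) = F' (k + 1) := by
        by_cases hk0 : k = 0
        · subst hk0
          rw [hFs1, hGs0, hCsa 1 (by omega) (by omega), hC'1, hcan]
        · have h2' : 2 ≤ k + 1 := by omega
          have ihG : Gs k = G' k := (ih (by omega)).2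
          rw [hFs (k + 1) h2' hle, show (k + 1) - 1 = k from rfl, ihG,
              hCsa (k + 1) (by omega) hk, hC' (k + 1) h2' hle', show (k + 1) - 1 = k from rfl, hcan]
      refine ⟨hFeq, ?_⟩
      rw [hGs (k + 1) (by omega) hle, hFeq, hF' (k + 1) (by omega) hle', hDE]
  -- at position u the state switches to the unprimed one at position v
  have hFsu : Fs u = F v := by
    have hGu1 : Gs (u - 1) = G' (u - 1) := (claimA (u - 1) le_rfl).2
    rw [hFs u (by omega) (by omega), hGu1, hCsb, hC v (by omega) (by omega)]
    exact hcan2 _ _ _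
  have hGsu : Gs u = G v := by
    rw [hGs u (by omega) (by omega), hFsu, hF v (by omega) (by omega), hDE]
  -- the tail agrees with the unprimed internal state, shifted
  have claimC : ∀ i, u ≤ i → i ≤ t - v + u →
      Fs i = F (v + i - u) ∧ Gs i = G (v + i - u) := by
    intro i
    induction i with
    | zero => intro h _; omega
    | succ k ih =>
      intro h1 h2
      by_cases hk : k + 1 = u
      · rw [show v + (k + 1) - u = v from by omega, hk]
        exact ⟨hFsu, hGsu⟩
      · have hk' : u + 1 ≤ k + 1 := by omega
        have ihh := ih (by omega) (by omega)
        have hFeq : Fs (k + 1) = F (v + (k + 1) - u) := by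
          rw [hFs (k + 1) (by omega) h2, show (k + 1) - 1 = k from rfl, ihh.2,
              hCsc (k + 1) hk' h2, hC (v + (k + 1) - u) (by omega) (by omega),
              show v + k - u = v + (k + 1) - u - 1 from by omega]
          exact hcan _ _
        refine ⟨hFeq, ?_⟩
        rw [hGs (k + 1) (by omega) h2, hFeq, hF _ (by omega) (by omega), hDE]
  refine ⟨?_, ?_, ?_⟩
  · intro i h1 h2
    have hGi : Gs i = G' i := (claimA i h2).2
    have hFi : Fs (i - 1) = F' (i - 1) := (claimA (i - 1) (by omega)).1
    rw [hPs i h1 (by omega), hGi, hFi, hG' i h1 (by omega)]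
    exact hcan _ _
  · have hFu1 : Fs (u - 1) = F' (u - 1) := (claimA (u - 1) le_rfl).1
    rw [hPs u (by omega) (by omega), hGsu, hFu1, hG v (by omega) (by omega)]
    ring
  · intro i h1 h2
    have hGi : Gs i = G (v + i - u) := (claimC i (by omega) h2).2
    have hFi : Fs (i - 1) = F (v + (i - 1) - u) := (claimC (i - 1) (by omega) (by omega)).1
    rw [hPs i (by omega) h2, hGi, hFi, hG (v + i - u) (by omega) (by omega),
        show v + (i - 1) - u = v + i - u - 1 from by omega]
    exact hcan _ _
end

section
/- (Induction lemma, part (ii).) With the Figure-1 mode where g : V → V is additive (g(X ⊕ Y) = g(X) ⊕ g(Y)), for all 1 ≤ j ≤ t-2 and 1 ≤ k ≤ (t-j)/2: ⊕_{i=1}^{k} g^{k-i}(C_{j+2i-1} ⊕ P_{j+2i}) = g^k(G_j) ⊕ G_{j+2k}. -/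
/-- Induction lemma, part (ii): in the Figure-1 mode with additive `g`,
`⊕_{i=1}^{k} g^{k-i}(C_{j+2i-1} ⊕ P_{j+2i}) = g^k(G_j) ⊕ G_{j+2k}`
for `1 ≤ j ≤ t-2` and `1 ≤ k ≤ (t-j)/2`. -/
theorem figure1_induction_ii (n : ℕ)
    (E : (Fin n → ZMod 2) → (Fin n → ZMod 2)) (hE : Function.Bijective E)
    (g : (Fin n → ZMod 2) → (Fin n → ZMod 2))
    (hg : ∀ X Y, g (X + Y) = g X + g Y)
    (t : ℕ) (P F G C : ℕ → (Fin n → ZMod 2))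
    (hG : ∀ i, 1 ≤ i → i ≤ t → G i = P i + F (i - 1))
    (hF : ∀ i, 1 ≤ i → i ≤ t → F i = E (G i))
    (hC1 : C 1 = F 1 + G 0)
    (hC : ∀ i, 2 ≤ i → i ≤ t → C i = F i + g (G (i - 1))) :
    ∀ j k, 1 ≤ j → j ≤ t - 2 → 1 ≤ k → k ≤ (t - j) / 2 →
      ∑ i ∈ Finset.range k, g^[k - 1 - i] (C (j + 2 * i + 1) + P (j + 2 * i + 2)) =
        g^[k] (G j) + G (j + 2 * k) := by
  intro j k hj hjt hk
  have two : ∀ x : Fin n → ZMod 2, x + x = 0 := fun x =>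
    funext fun i => CharTwo.add_self_eq_zero (x i)
  have key : ∀ m, 1 ≤ m → m + 2 ≤ t → C (m + 1) + P (m + 2) = g (G m) + G (m + 2) := by
    intro m h1 h2
    have hc := hC (m + 1) (by omega) (by omega)
    have hgm := hG (m + 2) (by omega) (by omega)
    simp only [show m + 1 - 1 = m from rfl, show m + 2 - 1 = m + 1 from rfl] at hc hgm
    rw [hc, hgm]
    abel
  induction k, hk using Nat.le_induction with
  | base =>
      intro hkle
      have := key j hj (by omega)
      simpa using this
  | succ k hk1 ih =>
      intro hkle
      have ihv := ih (by omega)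
      rw [Finset.sum_range_succ]
      have hpre : ∑ i ∈ Finset.range k, g^[k + 1 - 1 - i] (C (j + 2 * i + 1) + P (j + 2 * i + 2))
          = g (∑ i ∈ Finset.range k, g^[k - 1 - i] (C (j + 2 * i + 1) + P (j + 2 * i + 2))) := by
        have gh : (Fin n → ZMod 2) →+ (Fin n → ZMod 2) := AddMonoidHom.mk' g hg
        rw [show g (∑ i ∈ Finset.range k, g^[k - 1 - i] (C (j + 2 * i + 1) + P (j + 2 * i + 2)))
            = (AddMonoidHom.mk' g hg) (∑ i ∈ Finset.range k,
              g^[k - 1 - i] (C (j + 2 * i + 1) + P (j + 2 * i + 2))) from rfl, map_sum]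
        refine Finset.sum_congr rfl fun i hi => ?_
        have hik : i < k := Finset.mem_range.mp hi
        rw [show k + 1 - 1 - i = (k - 1 - i) + 1 from by omega,
          Function.iterate_succ_apply']
        rfl
      rw [hpre, ihv, show k + 1 - 1 - k = 0 from by omega, Function.iterate_zero_apply,
        key (j + 2 * k) (by omega) (by omega), hg,
        show g (g^[k] (G j)) = g^[k + 1] (G j) from (Function.iterate_succ_apply' g k _).symm,
        show j + 2 * (k + 1) = j + 2 * k + 2 from by omega]
      have h2 := two (g (G (j + 2 * k)))
      linear_combination h2
end

section
/- (IV-reuse forgery.) With the Figure-1 mode where g is additive, suppose C₁,…,C_t and C'₁,…,C'_{t'} are encryptions of P₁,…,P_t and P'₁,…,P'_{t'} under the same key and identical IVs (F₀ = F'₀, G₀ = G'₀), with t, t' ≥ 3. Then decrypting C'₁, C'₂, C₃ ⊕ g(C₁ ⊕ C'₁ ⊕ P₂ ⊕ P'₂), C₄,…,C_t (with the common IVs) yields P'₁, P'₂, P₃ ⊕ F'₂ ⊕ F₂, P₄,…,P_t. -/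
/-- IV-reuse forgery: if two messages are encrypted in the Figure-1 mode with additive `g`
under the same key and identical IVs, then the spliced ciphertext
`C'₁, C'₂, C₃ ⊕ g(C₁ ⊕ C'₁ ⊕ P₂ ⊕ P'₂), C₄,…,C_t` decrypts to
`P'₁, P'₂, P₃ ⊕ F'₂ ⊕ F₂, P₄,…,P_t`. -/
theorem figure1_iv_reuse_forgery (n : ℕ)
    (E D : (Fin n → ZMod 2) → (Fin n → ZMod 2))
    (hE : Function.Bijective E)
    (hDE : ∀ x, D (E x) = x) (hED : ∀ x, E (D x) = x)
    (g : (Fin n → ZMod 2) → (Fin n → ZMod 2))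
    (hg : ∀ X Y, g (X + Y) = g X + g Y)
    (t t' : ℕ) (ht : 3 ≤ t) (ht' : 3 ≤ t')
    -- encryption of P₁,…,P_t
    (P F G C : ℕ → (Fin n → ZMod 2))
    (hG : ∀ i, 1 ≤ i → i ≤ t → G i = P i + F (i - 1))
    (hF : ∀ i, 1 ≤ i → i ≤ t → F i = E (G i))
    (hC1 : C 1 = F 1 + G 0)
    (hC : ∀ i, 2 ≤ i → i ≤ t → C i = F i + g (G (i - 1)))
    -- encryption of P'₁,…,P'_{t'} with the same key and identical IVs
    (P' F' G' C' : ℕ → (Fin n → ZMod 2))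
    (hIVF : F' 0 = F 0) (hIVG : G' 0 = G 0)
    (hG' : ∀ i, 1 ≤ i → i ≤ t' → G' i = P' i + F' (i - 1))
    (hF' : ∀ i, 1 ≤ i → i ≤ t' → F' i = E (G' i))
    (hC'1 : C' 1 = F' 1 + G' 0)
    (hC' : ∀ i, 2 ≤ i → i ≤ t' → C' i = F' i + g (G' (i - 1)))
    -- the forged ciphertext C*₁,…,C*_t
    (Cs : ℕ → (Fin n → ZMod 2))
    (hCs1 : Cs 1 = C' 1) (hCs2 : Cs 2 = C' 2)
    (hCs3 : Cs 3 = C 3 + g (C 1 + C' 1 + P 2 + P' 2))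
    (hCs : ∀ i, 4 ≤ i → i ≤ t → Cs i = C i)
    -- decryption of the forged ciphertext with the common IVs
    (Fs Gs Ps : ℕ → (Fin n → ZMod 2))
    (hFs0 : Fs 0 = F 0) (hGs0 : Gs 0 = G 0)
    (hFs1 : Fs 1 = Cs 1 + Gs 0)
    (hFs : ∀ i, 2 ≤ i → i ≤ t → Fs i = Cs i + g (Gs (i - 1)))
    (hGs : ∀ i, 1 ≤ i → i ≤ t → Gs i = D (Fs i))
    (hPs : ∀ i, 1 ≤ i → i ≤ t → Ps i = Gs i + Fs (i - 1)) :
    Ps 1 = P' 1 ∧ Ps 2 = P' 2 ∧ Ps 3 = P 3 + F' 2 + F 2 ∧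
    (∀ i, 4 ≤ i → i ≤ t → Ps i = P i) := by

  have h0 : ∀ x : Fin n → ZMod 2, x + x = 0 := by
    intro x; funext i; exact CharTwo.add_self_eq_zero _
  -- step 1
  have hFs1' : Fs 1 = F' 1 := by
    rw [hFs1, hCs1, hC'1, hGs0, ← hIVG]
    linear_combination h0 (G' 0)
  have hGs1' : Gs 1 = G' 1 := by
    rw [hGs 1 (by omega) (by omega), hFs1', hF' 1 (by omega) (by omega), hDE]
  have hPs1 : Ps 1 = P' 1 := by
    have h := hPs 1 (by omega) (by omega)
    norm_num at h
    rw [h, hGs1', hFs0, ← hIVF, hG' 1 (by omega) (by omega)]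
    norm_num
    linear_combination h0 (F' 0)
  -- step 2
  have hFs2' : Fs 2 = F' 2 := by
    have h := hFs 2 (by omega) (by omega)
    norm_num at h
    rw [h, hCs2, hGs1', hC' 2 (by omega) (by omega)]
    norm_num
    linear_combination h0 (g (G' 1))
  have hGs2' : Gs 2 = G' 2 := by
    rw [hGs 2 (by omega) (by omega), hFs2', hF' 2 (by omega) (by omega), hDE]
  have hPs2 : Ps 2 = P' 2 := by
    have h := hPs 2 (by omega) (by omega)
    norm_num at h
    rw [h, hGs2', hFs1', hG' 2 (by omega) (by omega)]
    norm_num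
    linear_combination h0 (F' 1)
  -- key sum identity
  have hGsum : C 1 + C' 1 + P 2 + P' 2 = G 2 + G' 2 := by
    rw [hC1, hC'1, hIVG, hG 2 (by omega) (by omega), hG' 2 (by omega) (by omega)]
    norm_num
    linear_combination h0 (G 0)
  -- step 3
  have hFs3 : Fs 3 = F 3 := by
    have h := hFs 3 (by omega) (by omega)
    norm_num at h
    rw [h, hCs3, hGs2', hGsum, hg, hC 3 (by omega) (by omega)]
    norm_num
    linear_combination h0 (g (G 2)) + h0 (g (G' 2))
  have hGs3 : Gs 3 = G 3 := by
    rw [hGs 3 (by omega) (by omega), hFs3, hF 3 (by omega) (by omega), hDE]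
  have hPs3 : Ps 3 = P 3 + F' 2 + F 2 := by
    have h := hPs 3 (by omega) (by omega)
    norm_num at h
    rw [h, hGs3, hFs2', hG 3 (by omega) (by omega)]
    norm_num
    ring
  refine ⟨hPs1, hPs2, hPs3, ?_⟩
  -- induction: Fs i = F i and Gs i = G i for 3 ≤ i ≤ t
  have key : ∀ i, 3 ≤ i → i ≤ t → Fs i = F i ∧ Gs i = G i := by
    intro i
    induction i with
    | zero => omega
    | succ k ih =>
      intro h3 hle
      rcases Nat.lt_or_ge k 3 with hk | hk
      · have hk2 : k = 2 := by omega
        subst hk2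
        exact ⟨hFs3, hGs3⟩
      · obtain ⟨ihF, ihG⟩ := ih hk (by omega)
        have hFk : Fs (k + 1) = F (k + 1) := by
          have h := hFs (k + 1) (by omega) hle
          simp only [Nat.add_sub_cancel] at h
          have h2 := hC (k + 1) (by omega) hle
          simp only [Nat.add_sub_cancel] at h2
          rw [h, hCs (k + 1) (by omega) hle, h2, ihG]
          linear_combination h0 (g (G k))
        refine ⟨hFk, ?_⟩
        rw [hGs (k + 1) (by omega) hle, hFk, hF (k + 1) (by omega) hle, hDE]
  intro i h4 hle
  have h := hPs i (by omega) hle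
  obtain ⟨_, hGi⟩ := key i (by omega) hle
  obtain ⟨hFi1, _⟩ := key (i - 1) (by omega) (by omega)
  rw [h, hGi, hFi1, hG i (by omega) hle]
  linear_combination h0 (F (i - 1))
end
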